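/- arXiv:1507.07336 — 3 statements merged into one kernel-verified Lean document; each statement's English description precedes it below -/
import Mathlib

section
/- For every integer n ≥ 5, the design on (ℤ/n ∪ {∞}) obtained by developing over ℤ/n the six initial blocks of size 2 — for j = 0,1,2 (factor indices mod 3): B₁ⱼ with runs (F_j, F_{1+j}, F_{2+j}) = (∞, 0, −1) and (0, 1, 1), and B₂ⱼ with runs (∞, 0, 1) and (0, 2, 2), where ∞ + u = ∞ — is a POTB with three (n+1)-level factors on 6n blocks of size 2: every pair of distinct factors F_i, F_j satisfies M_{iB}·M_{jB}ᵀ = 2·M_{ij}. -/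
open Finset

/-- Level-vs-block incidence: number of runs in block `j` where factor `i` has level `p`. -/
def MB {B R I L : Type*} [Fintype R] [DecidableEq L]
    (plan : B → R → I → L) (i : I) (p : L) (j : B) : ℕ :=
  (Finset.univ.filter fun t : R => plan j t i = p).card

/-- Factor-vs-factor incidence: number of runs where factor `i` is at level `p`
and factor `i'` at level `q`. -/
def Mff {B R I L : Type*} [Fintype B] [Fintype R] [DecidableEq L]
    (plan : B → R → I → L) (i i' : I) (p q : L) : ℕ :=
  (Finset.univ.filter fun r : B × R => plan r.1 r.2 i = p ∧ plan r.1 r.2 i' = q).card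


set_option maxHeartbeats 1000000 in
lemma potb_sum1 (n : ℕ) [NeZero n] (c v : ZMod n) :
    ∑ u : ZMod n, (if c + u = v then (1:ℕ) else 0) = 1 := by
  have h : ∀ u : ZMod n, (c + u = v) ↔ (u = v - c) := fun u =>
    ⟨fun h => by linear_combination h, fun h => by linear_combination h⟩
  simp only [h]; simp

set_option maxHeartbeats 1000000 in
lemma potb_sum2 (n : ℕ) [NeZero n] (c c' v w : ZMod n) :
    ∑ u : ZMod n, (if c + u = v then (1:ℕ) else 0) * (if c' + u = w then 1 else 0)
      = if w - v = c' - c then 1 else 0 := by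
  have h : ∀ u : ZMod n,
      (if c + u = v then (1:ℕ) else 0) * (if c' + u = w then 1 else 0)
        = (if u = v - c then (1:ℕ) else 0) * (if w - v = c' - c then 1 else 0) := by
    intro u
    by_cases h1 : c + u = v
    · have hu : u = v - c := by linear_combination h1
      by_cases h2 : c' + u = w
      · have hc : w - v = c' - c := by linear_combination h1 - h2
        rw [if_pos h1, if_pos h2, if_pos hu, if_pos hc]
      · have hc : ¬ (w - v = c' - c) := fun h => h2 (by linear_combination h1 - h)
        rw [if_pos h1, if_neg h2, if_neg hc, mul_zero, mul_zero]
    · have hu : ¬ u = v - c := fun h => h1 (by linear_combination h)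
      rw [if_neg h1, if_neg hu, zero_mul, zero_mul]
  simp only [h, ← Finset.sum_mul]
  simp

lemma potb_sumZ3 (f : ZMod 3 → ℕ) : ∑ x : ZMod 3, f x = f 0 + f 1 + f 2 := by
  rw [show (univ : Finset (ZMod 3)) = {0,1,2} from by decide,
    Finset.sum_insert (by decide), Finset.sum_insert (by decide), Finset.sum_singleton,
    add_assoc]

lemma potb_iteAnd (A B : Prop) [Decidable A] [Decidable B] :
    (if A ∧ B then (1:ℕ) else 0) = (if A then 1 else 0) * (if B then 1 else 0) := by
  by_cases hA : A <;> by_cases hB : B <;> simp [hA, hB]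

/-- The initial blocks `B_{1j}`, `B_{2j}` (before development): entry of run `t`
of block family `i` at relative factor position `rel` (`∞` is `none`). -/
def init8 (n : ℕ) (i : Fin 2) (t : Fin 2) (rel : ZMod 3) : Option (ZMod n) :=
  if i = 0 then
    (if t = 0 then (if rel = 0 then none else if rel = 1 then some 0 else some (-1))
     else (if rel = 0 then some 0 else some 1))
  else
    (if t = 0 then (if rel = 0 then none else if rel = 1 then some 0 else some 1)
     else (if rel = 0 then some 0 else some 2))

/-- The developed plan: blocks `(i, j, u)` for `i ∈ Fin 2`, cyclic factor shift
`j ∈ ZMod 3`, translate `u ∈ ZMod n`; `∞` is fixed under addition. -/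
def plan8 (n : ℕ) : Fin 2 × ZMod 3 × ZMod n → Fin 2 → ZMod 3 → Option (ZMod n) :=
  fun b t fac => (init8 n b.1 t (fac - b.2.1)).map (· + b.2.2)

set_option maxHeartbeats 4000000 in
theorem stmt8 (n : ℕ) [NeZero n] (hn : 5 ≤ n) :
    ∀ i j : ZMod 3, i ≠ j → ∀ p q : Option (ZMod n),
      ∑ blk : Fin 2 × ZMod 3 × ZMod n, MB (plan8 n) i p blk * MB (plan8 n) j q blk
        = 2 * Mff (plan8 n) i j p q := by
  intro i j hij p q
  have hMB : ∀ (i : ZMod 3) (p : Option (ZMod n)) (blk : Fin 2 × ZMod 3 × ZMod n),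
      MB (plan8 n) i p blk = ∑ t : Fin 2, if plan8 n blk t i = p then 1 else 0 := by
    intro i p blk; rw [MB, Finset.card_filter]
  have step1 : ∑ blk : Fin 2 × ZMod 3 × ZMod n, MB (plan8 n) i p blk * MB (plan8 n) j q blk
      = ∑ i0 : Fin 2, ∑ j0 : ZMod 3, ∑ u : ZMod n, ∑ t : Fin 2, ∑ t' : Fin 2,
        (if plan8 n (i0, j0, u) t i = p then 1 else 0) *
          (if plan8 n (i0, j0, u) t' j = q then 1 else 0) := by
    simp only [hMB, Finset.sum_mul_sum, Fintype.sum_prod_type]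
  have step2 : Mff (plan8 n) i j p q
      = ∑ i0 : Fin 2, ∑ j0 : ZMod 3, ∑ u : ZMod n, ∑ t : Fin 2,
        (if plan8 n (i0, j0, u) t i = p then 1 else 0) *
          (if plan8 n (i0, j0, u) t j = q then 1 else 0) := by
    rw [Mff, Finset.card_filter]
    simp only [Fintype.sum_prod_type, potb_iteAnd]
  rw [step1, step2]
  clear step1 step2 hMB
  fin_cases i <;> fin_cases j <;> first
    | exact absurd rfl hij
    | (rcases p with _ | pv <;> rcases q with _ | qv <;>
        (simp (config := { decide := true }) only [Fin.sum_univ_two, potb_sumZ3, plan8, init8,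
            Option.map_some, Option.map_none, Option.some.injEq, reduceCtorEq,
            if_true, if_false, ite_true, ite_false, mul_zero, zero_mul, mul_one, one_mul,
            Finset.sum_add_distrib, Finset.sum_const_zero, add_zero, potb_sum1, potb_sum2] <;>
          norm_num <;> ring))
end

section
/- For n = 5, the three-factor design of Theorem 'POTB2' (developing the six initial blocks over ℤ/5, levels ℤ/5 ∪ {∞}) satisfies M_{iB}·M_{iB}ᵀ = 8·I₆ + 2·J₆ for each factor i = 1,2,3 (so each factor forms a BIBD with the block factor), yet the factor-versus-factor incidence matrices M_{ij} do not satisfy M₁₂·M₁₂ᵀ = f·I + g·J for any integers f, g. Hence this is a balanced POTB that is not a PERGOLA. -/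
open Finset

theorem stmt9 :
    -- each factor forms a BIBD with the block factor: M_{iB}·M_{iB}ᵀ = 8·I + 2·J
    (∀ i : ZMod 3, ∀ p q : Option (ZMod 5),
      ∑ blk : Fin 2 × ZMod 3 × ZMod 5, MB (plan8 5) i p blk * MB (plan8 5) i q blk
        = if p = q then 10 else 2) ∧
    -- ... yet it is not a PERGOLA: M₁₂·M₁₂ᵀ ≠ f·I + g·J for all integers f, g
    (¬ ∃ f g : ℤ, ∀ p q : Option (ZMod 5),
      (∑ r : Option (ZMod 5), (Mff (plan8 5) 0 1 p r * Mff (plan8 5) 0 1 q r : ℤ))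
        = (if p = q then f + g else g)) := by
  constructor
  · decide
  · rintro ⟨f, g, h⟩
    have h1 := h none none
    have h2 := h (some 0) (some 0)
    simp only [if_pos rfl] at h1 h2
    have e1 : (∑ r : Option (ZMod 5), (Mff (plan8 5) 0 1 none r * Mff (plan8 5) 0 1 none r : ℤ)) = 20 := by decide
    have e2 : (∑ r : Option (ZMod 5), (Mff (plan8 5) 0 1 (some 0) r * Mff (plan8 5) 0 1 (some 0) r : ℤ)) = 18 := by decide
    omega
end

section
/- For n = 10, a = 1, b = 3, each factor of the four-factor POTB of Theorem 'POTBk=2,4'(b) forms with the block factor a group-divisible design with 5 groups {j, j+5}, j = 0,…,4, with λ₀ = 0 (elements in the same group never occur together in a block) and λ₁ = 1 (elements in different groups occur together in exactly one block). -/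
open Finset

/-- The four initial blocks; `init12 n a b i t f` is the level of factor `f`
in run `t` of initial block `B_{i+1}`. -/
def init12 (n : ℕ) (a b : ZMod n) : Fin 4 → Fin 2 → Fin 4 → ZMod n :=
  ![![![0, a, 0, b], ![a, -a, b, -b]],
    ![![a, 0, b, 0], ![-a, -a, -b, -b]],
    ![![0, -b, -a, a], ![b, b, 0, -a]],
    ![![-b, 0, a, a], ![b, b, -a, 0]]]

/-- The plan developed over `ZMod n`: `4n` blocks of size 2, four factors. -/
def plan12 (n : ℕ) (a b : ZMod n) : Fin 4 × ZMod n → Fin 2 → Fin 4 → ZMod n :=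
  fun blk t f => init12 n a b blk.1 t f + blk.2

theorem stmt13 :
    ∀ i : Fin 4, ∀ p q : ZMod 10, p ≠ q →
      ∑ blk : Fin 4 × ZMod 10, MB (plan12 10 1 3) i p blk * MB (plan12 10 1 3) i q blk
        = if p - q = 5 then 0 else 1 := by
  decide
end
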